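/- For each regular uncountable cardinal κ and each positive integer n, there exists an atomistic join-semilattice L with zero, of breadth exactly n+1 and cardinality κ⁺ⁿ, such that every principal ideal of L has fewer than κ elements. -/

import Mathlib

/-!
Let `E` have cardinality `κ⁺ⁿ` and let `g` send finite subsets of `E` to sets of size `< κ` so
that every `(n+2)`-element set `W` contains some `ξ ∈ g (W \ {ξ})` (Kuratowski); such a `g` is
built by induction on `n`, well-ordering `E` in type `κ⁺ⁿ` and using the map of the previous level
on initial segments. Take for `L` the `g`-closures of finite subsets of `E`, ordered by inclusion.
Since `g` may be taken to vanish on sets of size `≤ 1`, the singletons are closed atoms and `L` is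
atomistic; regularity of `κ` keeps closures of small sets small, so principal ideals have size
`< κ`. If `n + 2` elements of `L` were independent, points `tᵢ ∈ aᵢ` outside the join of the others
would form a set contradicting the Kuratowski property; conversely, since `|E| ≥ κ⁺ⁿ`, Kuratowski's
free set theorem gives `n + 1` points none of which lies in the closure of the others, and their
singletons are independent.
-/

open Cardinal Set

universe u

theorem Cardinal.mk_finset_le_max (α : Type u) : #(Finset α) ≤ max ℵ₀ #α := by
  classical
  exact (mk_le_of_surjective List.toFinset_surjective).trans (mk_list_le_max α)

theorem Cardinal.mk_iUnion_nat_lt {α : Type u} {κ : Cardinal.{u}} (hreg : κ.IsRegular)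
    (hunc : ℵ₀ < κ) {s : ℕ → Set α} (hs : ∀ k, #(s k) < κ) : #(⋃ k, s k) < κ := by
  simpa using mk_iUnion_le_sum_mk_lift.trans_lt
    (sum_lt_lift_of_isRegular hreg (by simpa using hunc) hs)

theorem Cardinal.mk_iUnion_lt_of_finite {α ι : Type u} [Finite ι] {κ : Cardinal.{u}}
    (hreg : κ.IsRegular) {s : ι → Set α} (hs : ∀ i, #(s i) < κ) : #(⋃ i, s i) < κ :=
  (card_iUnion_lt_iff_forall_of_isRegular hreg
    ((lt_aleph0_of_finite _).trans_le hreg.aleph0_le)).2 hs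

theorem Set.exists_notMem_of_mk_lt {α : Type u} {s : Set α} (h : #s < #α) : ∃ x, x ∉ s := by
  by_contra! hs
  rw [eq_univ_of_forall hs, mk_univ] at h
  exact h.false

def HasBreadthAtMost (L : Type*) [SemilatticeSup L] [OrderBot L] [DecidableEq L] (m : ℕ) :
    Prop :=
  ∀ A : Finset L, A.card = m + 1 → ∃ a ∈ A, a ≤ (A.erase a).sup id

section FinitaryClosure

variable {E : Type u} (g : Finset E → Set E)

def IsClosedUnder (C : Set E) : Prop := ∀ U : Finset E, ↑U ⊆ C → g U ⊆ C

def finClosure : ClosureOperator (Set E) :=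
  .ofCompletePred (IsClosedUnder g) fun _ hs U hU =>
    subset_sInter fun C hC => hs C hC U (hU.trans (sInter_subset_of_mem hC))

variable {g}

theorem isClosed_finClosure_iff {C : Set E} : (finClosure g).IsClosed C ↔ IsClosedUnder g C :=
  Iff.rfl

theorem isClosedUnder_finClosure (S : Set E) : IsClosedUnder g (finClosure g S) :=
  (finClosure g).isClosed_closure S

theorem finClosure_eq_self_of_subsingleton (hsmall : ∀ U : Finset E, U.card ≤ 1 → g U = ∅)
    {S : Set E} (hS : S.Subsingleton) : finClosure g S = S :=
  (isClosed_finClosure_iff.2 fun U hU => by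
    rw [hsmall U (Finset.card_le_one.2 fun _ ha _ hb => hS (hU ha) (hU hb))]
    exact empty_subset _).closure_eq

variable (g) in
def closureStep (S : Set E) : Set E := S ∪ ⋃ U : Finset S, g (U.map (.subtype _))

theorem isClosedUnder_iUnion_iterate_closureStep (S : Set E) :
    IsClosedUnder g (⋃ k, (closureStep g)^[k] S) := by
  classical
  have hmono : Monotone fun k => (closureStep g)^[k] S :=
    monotone_nat_of_le_succ fun k => by
      rw [Function.iterate_succ_apply']
      exact subset_union_left
  intro U hU
  obtain ⟨k, hk⟩ := hmono.directed_le.exists_mem_subset_of_finset_subset_biUnion hU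
  refine subset_iUnion_of_subset (k + 1) ?_
  rw [Function.iterate_succ_apply', ← Finset.subtype_map_of_mem hk]
  exact subset_union_of_subset_right
    (subset_iUnion (fun V : Finset _ => g (V.map (.subtype _))) _) _

theorem finClosure_subset_iUnion_iterate (S : Set E) :
    finClosure g S ⊆ ⋃ k, (closureStep g)^[k] S :=
  (finClosure g).closure_min (subset_iUnion_of_subset 0 subset_rfl)
    (isClosedUnder_iUnion_iterate_closureStep S)

section Cardinality

variable {κ : Cardinal.{u}} (hreg : κ.IsRegular) (hunc : ℵ₀ < κ) (hg : ∀ U, #(g U) < κ)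
include hreg hunc hg

theorem mk_closureStep_lt {S : Set E} (hS : #S < κ) : #(closureStep g S) < κ :=
  (mk_union_le _ _).trans_lt <| add_lt_of_lt hreg.aleph0_le hS <|
    (card_iUnion_lt_iff_forall_of_isRegular hreg
      ((mk_finset_le_max S).trans_lt (max_lt hunc hS))).2 fun _ => hg _

theorem mk_finClosure_lt {S : Set E} (hS : #S < κ) : #(finClosure g S) < κ := by
  refine (mk_le_mk_of_subset (finClosure_subset_iUnion_iterate S)).trans_lt
    (mk_iUnion_nat_lt hreg hunc fun k => ?_)
  induction k with
  | zero => exact hS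
  | succ k ih =>
    rw [Function.iterate_succ_apply']
    exact mk_closureStep_lt hreg hunc hg ih

end Cardinality

theorem mk_finClosure_le {μ : Cardinal.{u}} (hμ : ℵ₀ ≤ μ) (hg : ∀ U, #(g U) ≤ μ) {S : Set E}
    (hS : #S ≤ μ) : #(finClosure g S) ≤ μ := by
  simp_rw [← Order.lt_succ_iff] at hg hS ⊢
  exact mk_finClosure_lt (isRegular_succ hμ) (hμ.trans_lt (Order.lt_succ μ)) hg hS

end FinitaryClosure

section Kuratowski

variable {α : Type u}

def IsFreeSet [DecidableEq α] (f : Finset α → Set α) (F : Finset α) : Prop :=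
  ∀ ξ ∈ F, ξ ∉ f (F.erase ξ)

/-- Existence of the map `f₀` of Kuratowski's free set theorem, for `m = n`. -/
def HasKuratowskiMap (κ : Cardinal.{u}) (m : ℕ) (α : Type u) [DecidableEq α] : Prop :=
  ∃ f : Finset α → Set α, (∀ U, #(f U) < κ) ∧ ∀ W : Finset α, W.card = m + 2 → ¬ IsFreeSet f W

variable {κ : Cardinal.{u}} {m : ℕ}

theorem HasKuratowskiMap.of_embedding [DecidableEq α] {β : Type u} [DecidableEq β] (e : α ↪ β)
    (h : HasKuratowskiMap κ m β) : HasKuratowskiMap κ m α := by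
  obtain ⟨f, hf_card, hf_free⟩ := h
  refine ⟨fun U => e ⁻¹' f (U.map e),
    fun U => (mk_preimage_of_injective _ _ e.injective).trans_lt (hf_card _),
    fun W hW hfree => hf_free (W.map e) (by rwa [Finset.card_map]) ?_⟩
  intro _ hξ'
  obtain ⟨ξ, hξ, rfl⟩ := Finset.mem_map.1 hξ'
  rw [← Finset.map_erase]
  exact hfree ξ hξ

theorem hasKuratowskiMap_zero [LinearOrder α] (hreg : κ.IsRegular) (h : ∀ β : α, #(Iio β) < κ) :
    HasKuratowskiMap κ 0 α := by
  refine ⟨fun U => ⋃ β : U, Iio β.1, fun U => mk_iUnion_lt_of_finite hreg fun β => h β,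
    fun W hW hfree => ?_⟩
  have hne : W.Nonempty := Finset.card_pos.1 (by omega)
  have hlt := W.min'_lt_max'_of_card (by omega)
  exact hfree _ (W.min'_mem hne) <| mem_iUnion.2
    ⟨⟨_, Finset.mem_erase.2 ⟨hlt.ne', W.max'_mem hne⟩⟩, hlt⟩

theorem hasKuratowskiMap_succ [LinearOrder α] (hreg : κ.IsRegular)
    (h : ∀ β : α, HasKuratowskiMap κ m (Iio β)) : HasKuratowskiMap κ (m + 1) α := by
  choose f hf_card hf_free using h
  -- Only `β = max W` matters for a given `W`; taking all `β ∈ U` avoids choosing the maximum.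
  refine ⟨fun U => ⋃ β : U, Subtype.val '' f β ((U.erase β).subtype (· ∈ Iio β.1)),
    fun U => mk_iUnion_lt_of_finite hreg fun β => mk_image_le.trans_lt (hf_card _ _),
    fun W hW hfree => ?_⟩
  have hne : W.Nonempty := Finset.card_pos.1 (by omega)
  set β := W.max' hne
  set V := (W.erase β).subtype (· ∈ Iio β)
  have hV : V.card = m + 2 := by
    rw [Finset.card_subtype,
      Finset.filter_true_of_mem (p := (· ∈ Iio β)) fun _ => W.lt_max'_of_mem_erase_max' hne,
      Finset.card_erase_of_mem (W.max'_mem hne), hW]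
    rfl
  refine hf_free β V hV fun η hη hmem => ?_
  have hηW : η.1 ∈ W := Finset.mem_of_mem_erase (Finset.mem_subtype.1 hη)
  have hVη : ((W.erase η).erase β).subtype (· ∈ Iio β) = V.erase η := by
    ext ζ
    simp [V, Finset.mem_erase, Subtype.ext_iff, and_left_comm]
  exact hfree η hηW (mem_iUnion.2
    ⟨⟨β, Finset.mem_erase.2 ⟨η.2.ne', W.max'_mem hne⟩⟩, η, hVη ▸ hmem, rfl⟩)

theorem hasKuratowskiMap_of_mk_le {α : Type u} [DecidableEq α] (hreg : κ.IsRegular) (m : ℕ)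
    (hα : #α ≤ (Order.succ)^[m] κ) : HasKuratowskiMap κ m α := by
  suffices HasKuratowskiMap κ m ((Order.succ)^[m] κ).ord.ToType from
    .of_embedding ((le_def _ _).1 (hα.trans_eq (mk_ord_toType _).symm)).some this
  have hIio (β : ((Order.succ)^[m] κ).ord.ToType) : #(Iio β) < (Order.succ)^[m] κ :=
    (mk_Iio_lt β (by rw [mk_ord_toType, Ordinal.type_toType])).trans_eq (mk_ord_toType _)
  cases m with
  | zero => exact hasKuratowskiMap_zero hreg hIio
  | succ m =>
    refine hasKuratowskiMap_succ hreg fun β => hasKuratowskiMap_of_mk_le hreg m ?_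
    rw [← Order.lt_succ_iff, ← Function.iterate_succ_apply' Order.succ]
    exact hIio β

theorem HasKuratowskiMap.exists_eq_empty_of_card_le_one [DecidableEq α]
    (h : HasKuratowskiMap κ m α) (hm : 0 < m) (hκ : κ ≠ 0) :
    ∃ f : Finset α → Set α, (∀ U, #(f U) < κ) ∧ (∀ U : Finset α, U.card ≤ 1 → f U = ∅) ∧
      ∀ W : Finset α, W.card = m + 2 → ¬ IsFreeSet f W := by
  obtain ⟨f, hf_card, hf_free⟩ := h
  refine ⟨fun U => if U.card ≤ 1 then ∅ else f U, fun U => ?_, fun U hU => if_pos hU,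
    fun W hW hfree => hf_free W hW fun ξ hξ => ?_⟩
  · dsimp only
    split_ifs
    · simpa [pos_iff_ne_zero] using hκ
    · exact hf_card U
  · have : ¬ (W.erase ξ).card ≤ 1 := by
      rw [Finset.card_erase_of_mem hξ]
      omega
    simpa [this] using hfree ξ hξ

end Kuratowski

section FreeSets

variable {E : Type u} [DecidableEq E] {g : Finset E → Set E}

theorem IsFreeSet.insert_map_subtype {M : Set E} (hM : IsClosedUnder g M) {p : E} (hp : p ∉ M)
    {F : Finset M}
    (hF : IsFreeSet (fun V => Subtype.val ⁻¹' g (insert p (V.map (.subtype _)))) F) :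
    IsFreeSet g (insert p (F.map (.subtype _))) := by
  have hpF : p ∉ F.map (.subtype _) := by simp [hp]
  intro ξ hξ
  rcases Finset.mem_insert.1 hξ with rfl | hξF
  · rw [Finset.erase_insert hpF]
    exact fun h => hp (hM _ (by simp) h)
  · obtain ⟨ζ, hζ, rfl⟩ := Finset.mem_map.1 hξF
    rw [Finset.erase_insert_of_ne (by rintro rfl; exact hp ζ.2), ← Finset.map_erase]
    exact hF ζ hζ

theorem exists_isFreeSet {κ : Cardinal.{u}} (hκ : ℵ₀ ≤ κ) (m : ℕ)
    (hE : (Order.succ)^[m] κ ≤ #E) (hg : ∀ U, #(g U) < κ) :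
    ∃ F : Finset E, F.card = m + 1 ∧ IsFreeSet g F := by
  induction m generalizing E with
  | zero =>
    obtain ⟨ξ, hξ⟩ := exists_notMem_of_mk_lt ((hg ∅).trans_le hE)
    exact ⟨{ξ}, rfl, by simpa [IsFreeSet] using hξ⟩
  | succ m ih =>
    -- A `g`-closed set `M` of size `μ = κ^{+m}` misses some `p`; recurse inside `M`.
    set μ := (Order.succ)^[m] κ
    have hμ : κ ≤ μ := Order.le_succ_iterate m κ
    have hμE : μ < #E :=
      (Order.lt_succ μ).trans_le (by rwa [← Function.iterate_succ_apply' Order.succ])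
    obtain ⟨S, hS⟩ := le_mk_iff_exists_set.1 hμE.le
    have hM : #(finClosure g S) ≤ μ :=
      mk_finClosure_le (hκ.trans hμ) (fun U => (hg U).le.trans hμ) hS.le
    obtain ⟨p, hp⟩ := exists_notMem_of_mk_lt (hM.trans_lt hμE)
    obtain ⟨F, hF, hfree⟩ := ih (E := finClosure g S)
      (hS ▸ mk_le_mk_of_subset ((finClosure g).le_closure S))
      (g := fun V => Subtype.val ⁻¹' g (insert p (V.map (.subtype _))))
      fun V => (mk_preimage_of_injective _ _ Subtype.val_injective).trans_lt (hg _)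
    refine ⟨_, ?_, hfree.insert_map_subtype (isClosedUnder_finClosure S) hp⟩
    rw [Finset.card_insert_of_notMem (by simp [hp]), Finset.card_map, hF]

end FreeSets

section FinGenClosed

variable {E : Type u} (g : Finset E → Set E)

instance : SemilatticeSup (finClosure g).Closeds := (finClosure g).gi.liftSemilatticeSup

instance : OrderBot (finClosure g).Closeds := (finClosure g).gi.gc.liftOrderBot

/-- The compact elements of the lattice of `g`-closed sets. -/
abbrev FinGenClosed : Type u := Set.range fun S : Finset E => (finClosure g).toCloseds S

instance : SemilatticeSup (FinGenClosed g) := Subtype.semilatticeSup <| by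
  classical
  rintro _ _ ⟨S, rfl⟩ ⟨T, rfl⟩
  exact ⟨S ∪ T, (congrArg _ (Finset.coe_union S T)).trans (finClosure g).gi.gc.l_sup⟩

instance : OrderBot (FinGenClosed g) :=
  Subtype.orderBot ⟨∅, (congrArg _ Finset.coe_empty).trans (finClosure g).gi.gc.l_bot⟩

namespace FinGenClosed

variable {g}

def mk (S : Finset E) : FinGenClosed g := ⟨(finClosure g).toCloseds S, S, rfl⟩

theorem coe_injective : Function.Injective fun x : FinGenClosed g => (x : Set E) :=
  fun _ _ h => Subtype.ext (Subtype.ext h)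

theorem le_iff_subset {x y : FinGenClosed g} : x ≤ y ↔ (x : Set E) ⊆ y := Iff.rfl

theorem coe_mk (S : Finset E) : ((mk S : FinGenClosed g) : Set E) = finClosure g S := rfl

theorem isClosedUnder_coe (x : FinGenClosed g) : IsClosedUnder g x := x.1.2

theorem mk_le_iff {S : Finset E} {x : FinGenClosed g} : mk S ≤ x ↔ ↑S ⊆ (x : Set E) :=
  x.1.2.closure_le_iff

theorem exists_mk_eq (x : FinGenClosed g) : ∃ S, mk S = x :=
  let ⟨_, S, hS⟩ := x
  ⟨S, Subtype.ext hS⟩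

theorem mk_union [DecidableEq E] (S T : Finset E) :
    mk (S ∪ T) = (mk S ⊔ mk T : FinGenClosed g) :=
  Subtype.ext <| (congrArg _ (Finset.coe_union S T)).trans (finClosure g).gi.gc.l_sup

theorem mk_empty : mk ∅ = (⊥ : FinGenClosed g) :=
  Subtype.ext <| (congrArg _ Finset.coe_empty).trans (finClosure g).gi.gc.l_bot

theorem mk_eq_sup_mk_singleton [DecidableEq E] (S : Finset E) :
    (mk S : FinGenClosed g) = S.sup fun ξ => mk {ξ} := by
  induction S using Finset.induction_on with
  | empty => exact mk_empty
  | insert ξ S _ ih => rw [Finset.sup_insert, ← ih, Finset.insert_eq, mk_union]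

theorem mk_finGenClosed_le : #(FinGenClosed g) ≤ #(Finset E) :=
  mk_le_of_surjective exists_mk_eq

theorem mk_Iic_lt {κ : Cardinal.{u}} (hreg : κ.IsRegular) (hunc : ℵ₀ < κ)
    (hg : ∀ U, #(g U) < κ) (x : FinGenClosed g) : #(Iic x) < κ := by
  classical
  obtain ⟨S, rfl⟩ := exists_mk_eq x
  have hS : #(finClosure g S) < κ :=
    mk_finClosure_lt hreg hunc hg ((lt_aleph0_of_finite _).trans hunc)
  refine (mk_le_of_surjective (f := fun T : Finset (finClosure g S) =>
    (⟨mk (T.map (.subtype _)), mk_le_iff.2 fun _ h => by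
      obtain ⟨t, -, rfl⟩ := Finset.mem_map.1 h
      exact t.2⟩ : Iic (mk S))) ?_).trans_lt
    ((mk_finset_le_max _).trans_lt (max_lt hunc hS))
  rintro ⟨y, hy⟩
  obtain ⟨T, rfl⟩ := exists_mk_eq y
  have hT : ↑T ⊆ finClosure g S := ((finClosure g).le_closure _).trans (le_iff_subset.1 hy)
  exact ⟨T.subtype (· ∈ finClosure g S),
    Subtype.ext (congrArg mk (Finset.subtype_map_of_mem hT))⟩

section Atoms

variable (hsmall : ∀ U : Finset E, U.card ≤ 1 → g U = ∅)
include hsmall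

theorem coe_bot : ((⊥ : FinGenClosed g) : Set E) = ∅ := by
  rw [← mk_empty, coe_mk, Finset.coe_empty,
    finClosure_eq_self_of_subsingleton hsmall subsingleton_empty]

theorem coe_mk_singleton (ξ : E) : ((mk {ξ} : FinGenClosed g) : Set E) = {ξ} := by
  rw [coe_mk, Finset.coe_singleton,
    finClosure_eq_self_of_subsingleton hsmall subsingleton_singleton]

theorem mk_singleton_injective : Function.Injective fun ξ : E => (mk {ξ} : FinGenClosed g) :=
  fun ξ η h => by
    simpa [coe_mk_singleton hsmall] using congrArg (fun x : FinGenClosed g => (x : Set E)) h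

theorem isAtom_mk_singleton (ξ : E) : IsAtom (mk {ξ} : FinGenClosed g) := by
  refine ⟨fun h => ?_, fun b hb => coe_injective ?_⟩
  · simpa [coe_bot hsmall, coe_mk_singleton hsmall] using
      congrArg (fun x : FinGenClosed g => (x : Set E)) h
  · have hb_sub := le_iff_subset.1 hb.le
    rw [coe_mk_singleton hsmall] at hb_sub
    rcases subset_singleton_iff_eq.1 hb_sub with h | h
    · exact h.trans (coe_bot hsmall).symm
    · exact absurd (coe_injective (h.trans (coe_mk_singleton hsmall ξ).symm)) hb.ne

theorem exists_isAtom_finset_sup_eq (x : FinGenClosed g) :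
    ∃ s : Finset (FinGenClosed g), (∀ a ∈ s, IsAtom a) ∧ x = s.sup id := by
  classical
  obtain ⟨S, rfl⟩ := exists_mk_eq x
  refine ⟨S.image fun ξ => mk {ξ}, by simpa using fun ξ _ => isAtom_mk_singleton hsmall ξ, ?_⟩
  rw [Finset.sup_image, mk_eq_sup_mk_singleton]
  rfl

theorem mk_le_mk_finGenClosed : #E ≤ #(FinGenClosed g) :=
  mk_le_of_injective (mk_singleton_injective hsmall)

end Atoms

variable [DecidableEq (FinGenClosed g)] [DecidableEq E] {m : ℕ}

theorem hasBreadthAtMost (hg : ∀ W : Finset E, W.card = m + 2 → ¬ IsFreeSet g W) :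
    HasBreadthAtMost (FinGenClosed g) (m + 1) := by
  intro A hA
  by_contra! hA_indep
  have hwit (a : A) :
      ∃ t, t ∈ (a.1 : Set E) ∧ t ∉ (((A.erase a).sup id : FinGenClosed g) : Set E) :=
    not_subset.1 (hA_indep a a.2)
  choose t ht_mem ht_not using hwit
  have ht_sup (a b : A) (hba : b ≠ a) :
      t b ∈ (((A.erase a).sup id : FinGenClosed g) : Set E) :=
    le_iff_subset.1
      (Finset.le_sup (f := id) (Finset.mem_erase.2 ⟨Subtype.coe_ne_coe.2 hba, b.2⟩)) (ht_mem b)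
  have ht_inj : Function.Injective t := fun a b hab => by
    by_contra hne
    exact ht_not b (hab ▸ ht_sup b a hne)
  refine hg (Finset.univ.image t) (by
    rw [Finset.card_image_of_injective _ ht_inj, Finset.card_univ, Fintype.card_coe, hA]) ?_
  intro ξ hξ hmem
  obtain ⟨a, -, rfl⟩ := Finset.mem_image.1 hξ
  refine ht_not a (isClosedUnder_coe _ _ (fun ζ hζ => ?_) hmem)
  obtain ⟨hζa, hζ⟩ := Finset.mem_erase.1 hζ
  obtain ⟨b, -, rfl⟩ := Finset.mem_image.1 hζ
  exact ht_sup a b fun h => hζa (h ▸ rfl)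

theorem not_hasBreadthAtMost (hsmall : ∀ U : Finset E, U.card ≤ 1 → g U = ∅) {F : Finset E}
    (hF : F.card = m + 1) (hF_free : IsFreeSet (fun V => finClosure g V) F) :
    ¬ HasBreadthAtMost (FinGenClosed g) m := by
  intro h
  obtain ⟨_, ha, hle⟩ := h (F.image fun ξ => mk {ξ})
    (by rw [Finset.card_image_of_injective _ (mk_singleton_injective hsmall), hF])
  obtain ⟨ξ, hξ, rfl⟩ := Finset.mem_image.1 ha
  rw [← Finset.image_erase (mk_singleton_injective hsmall), Finset.sup_image, Function.id_comp,
    ← mk_eq_sup_mk_singleton, mk_le_iff, coe_mk] at hle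
  exact hF_free ξ hξ (hle (Finset.mem_singleton_self ξ))

end FinGenClosed

end FinGenClosed

/-- For each regular uncountable cardinal κ and each positive integer n, there exists an
atomistic join-semilattice L with zero, of breadth exactly n+1 and cardinality κ⁺ⁿ, in which
every principal ideal has fewer than κ elements. -/
theorem stmt_8 (κ : Cardinal) (hreg : κ.IsRegular) (hunc : Cardinal.aleph0 < κ)
    (n : ℕ) (hn : 0 < n) :
    ∃ (L : Type) (_ : SemilatticeSup L) (_ : OrderBot L) (_ : DecidableEq L),
      (∀ x : L, ∃ s : Finset L, (∀ a ∈ s, IsAtom a) ∧ x = s.sup id) ∧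
      (∀ A : Finset L, A.card = n + 2 → ∃ a ∈ A, a ≤ (A.erase a).sup id) ∧
      ¬ (∀ A : Finset L, A.card = n + 1 → ∃ a ∈ A, a ≤ (A.erase a).sup id) ∧
      Cardinal.mk L = (Order.succ)^[n] κ ∧
      (∀ x : L, Cardinal.mk ↥(Set.Iic x) < κ) := by
  classical
  obtain ⟨E, hE⟩ : ∃ E : Type, #E = (Order.succ)^[n] κ := ⟨_, mk_out _⟩
  obtain ⟨g, hg_card, hg_small, hg_kur⟩ :=
    (hasKuratowskiMap_of_mk_le hreg n hE.le).exists_eq_empty_of_card_le_one hn hreg.pos.ne'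
  obtain ⟨F, hF, hF_free⟩ := exists_isFreeSet hunc.le n hE.ge (g := fun V => finClosure g V)
    fun V => mk_finClosure_lt hreg hunc hg_card ((lt_aleph0_of_finite _).trans hunc)
  have : Infinite E := infinite_iff.2 (hE ▸ hunc.le.trans (Order.le_succ_iterate n κ))
  refine ⟨FinGenClosed g, inferInstance, inferInstance, inferInstance,
    FinGenClosed.exists_isAtom_finset_sup_eq hg_small, FinGenClosed.hasBreadthAtMost hg_kur,
    FinGenClosed.not_hasBreadthAtMost hg_small hF hF_free,
    le_antisymm ?_ (hE ▸ FinGenClosed.mk_le_mk_finGenClosed hg_small),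
    FinGenClosed.mk_Iic_lt hreg hunc hg_card⟩
  exact FinGenClosed.mk_finGenClosed_le.trans_eq ((mk_finset_of_infinite E).trans hE)
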